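/- (3-phi-2 generating function with free parameter for q-inverse Al-Salam–Chihara polynomials.) Let q ∈ ℂ with 0 < |q| < 1, let γ, a, b, t ∈ ℂ* with |at| < 1, |bt| < 1, 1/(ab) ∉ Ω_q, −bt ∉ Ω_q and −γbt ∉ Ω_q. Let z ∈ ℂ*, x = (z + z^{−1})/2. Then ∑_{n=0}^∞ t^n (γ;q)_n q^{n(n−1)/2} p_n(x;a,b|q^{−1}) / ( (q;q)_n (1/(ab);q)_n ) = [ (−γbt;q)_∞ / (−bt;q)_∞ ] · ∑_{k=0}^∞ [ (γ, z/a, 1/(az);q)_k / ( (q, 1/(ab), −γbt;q)_k ) ] (−at)^k. -/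

import Mathlib

open Finset

/-- The finite q-Pochhammer symbol `(a;q)_n = ∏_{j=0}^{n-1} (1 - a q^j)`. -/
noncomputable def qPoch (a q : ℂ) (n : ℕ) : ℂ := ∏ j ∈ Finset.range n, (1 - a * q ^ j)

/-- The infinite q-Pochhammer symbol `(a;q)_∞ = ∏_{j=0}^{∞} (1 - a q^j)`. -/
noncomputable def qPochInf (a q : ℂ) : ℂ := ∏' j : ℕ, (1 - a * q ^ j)

/-- `Ω_q = {q^{-k} : k ∈ ℕ}`. -/
def Omega (q : ℂ) : Set ℂ := {w : ℂ | ∃ k : ℕ, w = q⁻¹ ^ k}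

/-- The q-inverse Al-Salam--Chihara polynomials `p_n(x;a,b|q⁻¹)`, where
`x = (z + z⁻¹)/2`. -/
noncomputable def alSalamChiharaInv (q a b z : ℂ) (n : ℕ) : ℂ :=
  q ^ (-((n * (n - 1) / 2 : ℕ) : ℤ)) * (-b) ^ n * qPoch (1 / (a * b)) q n *
    ∑ k ∈ Finset.range (n + 1),
      (qPoch (q⁻¹ ^ n) q k * qPoch (z / a) q k * qPoch (1 / (a * z)) q k) /
        (qPoch q q k * qPoch (1 / (a * b)) q k) *
        ((-1) ^ k * q ^ (-((k * (k - 1) / 2 : ℕ) : ℤ)) * (q ^ n * a / b) ^ k)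

open Filter Complex





lemma qPoch_zero (a q : ℂ) : qPoch a q 0 = 1 := by simp [qPoch]

lemma qPoch_succ (a q : ℂ) (n : ℕ) : qPoch a q (n + 1) = qPoch a q n * (1 - a * q ^ n) := by
  simp [qPoch, Finset.prod_range_succ]

lemma qPoch_add (a q : ℂ) (k m : ℕ) :
    qPoch a q (k + m) = qPoch a q k * qPoch (a * q ^ k) q m := by
  rw [qPoch, qPoch, qPoch, Finset.prod_range_add]
  congr 1
  refine Finset.prod_congr rfl fun j _ => ?_
  rw [pow_add]; ring

lemma qPoch_ne_zero {c q : ℂ} (h : ∀ j : ℕ, 1 - c * q ^ j ≠ 0) (n : ℕ) : qPoch c q n ≠ 0 :=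
  Finset.prod_ne_zero_iff.mpr fun j _ => h j

lemma factor_ne_zero_of_not_omega {c q : ℂ} (hq : q ≠ 0) (h : c ∉ Omega q) (j : ℕ) :
    1 - c * q ^ j ≠ 0 := by
  intro hj
  refine h ⟨j, ?_⟩
  have h1 : c * q ^ j = 1 := by linear_combination -hj
  rw [inv_pow]
  exact eq_inv_of_mul_eq_one_left h1

lemma one_sub_ne_zero_of_abs_lt {u : ℂ} (h : ‖u‖ < 1) : 1 - u ≠ 0 := by
  intro h0
  have : u = 1 := by linear_combination -h0
  rw [this] at h; simp at h

lemma factor_ne_zero_of_abs_lt {c q : ℂ} (hq1 : ‖q‖ < 1) (hc : ‖c‖ < 1)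
    (j : ℕ) : 1 - c * q ^ j ≠ 0 := by
  apply one_sub_ne_zero_of_abs_lt
  rw [norm_mul, norm_pow]
  calc ‖c‖ * ‖q‖ ^ j ≤ ‖c‖ * 1 := by
        refine mul_le_mul_of_nonneg_left ?_ (norm_nonneg c)
        exact pow_le_one₀ (norm_nonneg q) hq1.le
    _ = ‖c‖ := mul_one _
    _ < 1 := hc

lemma factor_q_ne_zero {q : ℂ} (hq1 : ‖q‖ < 1) (j : ℕ) : 1 - q * q ^ j ≠ 0 := by
  apply one_sub_ne_zero_of_abs_lt
  rw [norm_mul, norm_pow]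
  calc ‖q‖ * ‖q‖ ^ j ≤ ‖q‖ * 1 := by
        refine mul_le_mul_of_nonneg_left ?_ (norm_nonneg q)
        exact pow_le_one₀ (norm_nonneg q) hq1.le
    _ = ‖q‖ := mul_one _
    _ < 1 := hq1

lemma abs_qPoch_le {c q : ℂ} (hq1 : ‖q‖ < 1) (n : ℕ) :
    ‖qPoch c q n‖ ≤ Real.exp (‖c‖ / (1 - ‖q‖)) := by
  have hq0 : (0:ℝ) ≤ ‖q‖ := norm_nonneg q
  rw [qPoch, norm_prod]
  have step1 : ∀ j ∈ Finset.range n,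
      ‖1 - c * q ^ j‖ ≤ Real.exp (‖c‖ * ‖q‖ ^ j) := by
    intro j _
    calc ‖1 - c * q ^ j‖ ≤ ‖(1 : ℂ)‖ + ‖c * q ^ j‖ := by
          exact (norm_sub_le _ _).trans (by rw [norm_mul])
      _ = 1 + ‖c‖ * ‖q‖ ^ j := by rw [norm_one, norm_mul, norm_pow]
      _ ≤ Real.exp (‖c‖ * ‖q‖ ^ j) := by
          rw [add_comm]; exact Real.add_one_le_exp _
  calc ∏ j ∈ Finset.range n, ‖1 - c * q ^ j‖
      ≤ ∏ j ∈ Finset.range n, Real.exp (‖c‖ * ‖q‖ ^ j) :=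
        Finset.prod_le_prod (fun j _ => norm_nonneg _) step1
    _ = Real.exp (∑ j ∈ Finset.range n, ‖c‖ * ‖q‖ ^ j) :=
        (Real.exp_sum _ _).symm
    _ ≤ Real.exp (‖c‖ / (1 - ‖q‖)) := by
        apply Real.exp_le_exp.mpr
        rw [← Finset.mul_sum]
        rw [div_eq_mul_inv]
        refine mul_le_mul_of_nonneg_left ?_ (norm_nonneg c)
        calc ∑ j ∈ Finset.range n, ‖q‖ ^ j
            ≤ ∑' j : ℕ, ‖q‖ ^ j := by
              refine Summable.sum_le_tsum _ (fun j _ => by positivity) ?_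
              exact summable_geometric_of_lt_one hq0 hq1
          _ = (1 - ‖q‖)⁻¹ := tsum_geometric_of_lt_one hq0 hq1

lemma summable_log_qfac {c q : ℂ} (hq1 : ‖q‖ < 1) :
    Summable (fun j : ℕ => Complex.log (1 - c * q ^ j)) := by
  have hq0 : (0:ℝ) ≤ ‖q‖ := norm_nonneg q
  have htends : Tendsto (fun j : ℕ => ‖c‖ * ‖q‖ ^ j) atTop (nhds 0) := by
    simpa using (tendsto_pow_atTop_nhds_zero_of_lt_one hq0 hq1).const_mul (‖c‖)
  have hev : ∀ᶠ j in (atTop : Filter ℕ), ‖c‖ * ‖q‖ ^ j ≤ 1/2 :=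
    htends.eventually (eventually_le_nhds (by norm_num))
  apply Summable.of_norm_bounded_eventually_nat (g :=
    fun j => 3/2 * (‖c‖ * ‖q‖ ^ j))
  · exact ((summable_geometric_of_lt_one hq0 hq1).mul_left _).mul_left _
  · filter_upwards [hev] with j hj
    have : ‖(-(c * q ^ j) : ℂ)‖ ≤ 1/2 := by
      rw [norm_neg]
      simpa [norm_mul, norm_pow] using hj
    have h2 := Complex.norm_log_one_add_half_le_self this
    rw [show (1 : ℂ) + -(c * q ^ j) = 1 - c * q ^ j by ring] at h2
    simpa [norm_mul, norm_pow] using h2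

lemma multipliable_qfac {c q : ℂ} (hq1 : ‖q‖ < 1)
    (h : ∀ j : ℕ, 1 - c * q ^ j ≠ 0) : Multipliable (fun j : ℕ => 1 - c * q ^ j) := by
  exact Complex.multipliable_of_summable_log (f := fun j : ℕ => 1 - c * q ^ j)
    (summable_log_qfac hq1)

lemma qPochInf_eq_exp {c q : ℂ} (hq1 : ‖q‖ < 1)
    (h : ∀ j : ℕ, 1 - c * q ^ j ≠ 0) :
    qPochInf c q = Complex.exp (∑' j : ℕ, Complex.log (1 - c * q ^ j)) := by
  have h2 := Complex.cexp_tsum_eq_tprod (f := fun j : ℕ => 1 - c * q ^ j) h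
    (summable_log_qfac hq1)
  rw [qPochInf, ← h2]

lemma qPochInf_ne_zero {c q : ℂ} (hq1 : ‖q‖ < 1)
    (h : ∀ j : ℕ, 1 - c * q ^ j ≠ 0) : qPochInf c q ≠ 0 := by
  rw [qPochInf_eq_exp hq1 h]
  exact Complex.exp_ne_zero _

lemma tendsto_qPoch {c q : ℂ} (hq1 : ‖q‖ < 1)
    (h : ∀ j : ℕ, 1 - c * q ^ j ≠ 0) :
    Tendsto (fun n => qPoch c q n) atTop (nhds (qPochInf c q)) :=
  (multipliable_qfac hq1 h).hasProd.tendsto_prod_nat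

lemma qPoch_lower {c q : ℂ} (hq1 : ‖q‖ < 1)
    (h : ∀ j : ℕ, 1 - c * q ^ j ≠ 0) :
    ∃ δ : ℝ, 0 < δ ∧ ∀ n, δ ≤ ‖qPoch c q n‖ := by
  have hpos : ∀ n, 0 < ‖qPoch c q n‖ := by
    intro n
    exact norm_pos_iff.mpr (Finset.prod_ne_zero_iff.mpr fun j _ => h j)
  have hlim : Tendsto (fun n => (‖qPoch c q n‖)⁻¹) atTop
      (nhds ((‖qPochInf c q‖)⁻¹)) := by
    refine Filter.Tendsto.inv₀ ?_ ?_
    · exact (continuous_norm.tendsto _).comp (tendsto_qPoch hq1 h)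
    · simpa using (qPochInf_ne_zero hq1 h)
  obtain ⟨C, hC⟩ := hlim.bddAbove_range
  have hC' : ∀ n, (‖qPoch c q n‖)⁻¹ ≤ C := by
    intro n; exact hC ⟨n, rfl⟩
  have hCpos : 0 < C := lt_of_lt_of_le (by simpa using inv_pos.mpr (hpos 0)) (hC' 0)
  refine ⟨C⁻¹, inv_pos.mpr hCpos, fun n => ?_⟩
  exact inv_le_of_inv_le₀ (hpos n) (hC' n)

lemma qPochInf_split {c q : ℂ} (hq1 : ‖q‖ < 1)
    (h : ∀ j : ℕ, 1 - c * q ^ j ≠ 0) (k : ℕ) :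
    qPochInf c q = qPoch c q k * qPochInf (c * q ^ k) q := by
  have h' : ∀ j : ℕ, 1 - c * q ^ k * q ^ j ≠ 0 := by
    intro j
    have := h (k + j)
    rw [pow_add] at this
    simpa [mul_assoc] using this
  have hsum := summable_log_qfac (c := c) hq1
  have hsplit := (Summable.sum_add_tsum_nat_add (f := fun j : ℕ => Complex.log (1 - c * q ^ j)) k hsum).symm
  rw [qPochInf_eq_exp hq1 h, qPochInf_eq_exp hq1 h', hsplit, Complex.exp_add]
  congr 1
  · rw [Complex.exp_sum, qPoch]
    refine Finset.prod_congr rfl fun j _ => Complex.exp_log (h j)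
  · congr 1
    refine tsum_congr fun j => ?_
    rw [add_comm j k, pow_add]
    ring_nf

/-! ### The q-binomial theorem -/

noncomputable def qbtTerm (q α : ℂ) (n : ℕ) : ℂ := qPoch α q n / qPoch q q n

noncomputable def qbtF (q α w : ℂ) : ℂ := ∑' n : ℕ, qbtTerm q α n * w ^ n

lemma qbtTerm_bound {q : ℂ} (hq1 : ‖q‖ < 1) (α : ℂ) :
    ∃ M : ℝ, 0 < M ∧ ∀ n, ‖qbtTerm q α n‖ ≤ M := by
  obtain ⟨δ, hδ, hlow⟩ := qPoch_lower hq1 (factor_q_ne_zero hq1)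
  refine ⟨Real.exp (‖α‖ / (1 - ‖q‖)) / δ, by positivity, fun n => ?_⟩
  rw [qbtTerm, norm_div]
  exact div_le_div₀ (Real.exp_pos _).le (abs_qPoch_le hq1 n) hδ (hlow n)

lemma summable_qbt {q : ℂ} (hq1 : ‖q‖ < 1) (α : ℂ) {w : ℂ}
    (hw : ‖w‖ < 1) :
    Summable (fun n : ℕ => qbtTerm q α n * w ^ n) := by
  obtain ⟨M, hM, hbd⟩ := qbtTerm_bound hq1 α
  apply Summable.of_norm_bounded (g := fun n => M * ‖w‖ ^ n)
  · exact (summable_geometric_of_lt_one (norm_nonneg w) hw).mul_left _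
  · intro n
    rw [norm_mul, norm_pow]
    exact mul_le_mul_of_nonneg_right (hbd n) (by positivity)

lemma qbt_rec {q : ℂ} (hqfac : ∀ j : ℕ, 1 - q * q ^ j ≠ 0) (α : ℂ) (n : ℕ) :
    qbtTerm q α (n + 1) * (1 - q * q ^ n) = qbtTerm q α n * (1 - α * q ^ n) := by
  have h1 : qPoch q q n ≠ 0 := qPoch_ne_zero hqfac n
  have h2 : (1 - q * q ^ n) ≠ 0 := hqfac n
  rw [qbtTerm, qbtTerm, qPoch_succ, qPoch_succ]
  rw [div_mul_eq_mul_div, mul_div_mul_right _ _ h2]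
  ring

lemma qbt_funeq {q : ℂ} (hq1 : ‖q‖ < 1)
    (hqfac : ∀ j : ℕ, 1 - q * q ^ j ≠ 0) (α : ℂ) {u : ℂ} (hu : ‖u‖ < 1) :
    (1 - u) * qbtF q α u = (1 - α * u) * qbtF q α (q * u) := by
  have hqu : ‖q * u‖ < 1 := by
    rw [norm_mul]
    calc ‖q‖ * ‖u‖ ≤ 1 * ‖u‖ :=
          mul_le_mul_of_nonneg_right hq1.le (norm_nonneg u)
      _ = ‖u‖ := one_mul _
      _ < 1 := hu
  set c : ℕ → ℂ := qbtTerm q α with hc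
  have S0 : Summable (fun n => c n * u ^ n) := summable_qbt hq1 α hu
  have S1 : Summable (fun n => c n * u ^ (n + 1)) := by
    apply (S0.mul_left u).congr
    intro n; ring
  have S2 : Summable (fun n => c n * (q * u) ^ n) := summable_qbt hq1 α hqu
  have S3 : Summable (fun n => α * (c n * (q * u) ^ n * u)) :=
    (S2.mul_right u).mul_left α
  have SA : Summable (fun n => c n * u ^ n - c n * (q * u) ^ n) := S0.sub S2
  have SB : Summable (fun n => c n * u ^ (n + 1) - α * (c n * (q * u) ^ n * u)) := S1.sub S3
  have claim1 : ∀ n, c (n + 1) * u ^ (n + 1) - c (n + 1) * (q * u) ^ (n + 1)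
      = c n * u ^ (n + 1) - α * (c n * (q * u) ^ n * u) := by
    intro n
    have hrec : c (n + 1) * (1 - q * q ^ n) = c n * (1 - α * q ^ n) := qbt_rec hqfac α n
    calc c (n+1) * u ^ (n+1) - c (n+1) * (q*u) ^ (n+1)
        = (c (n+1) * (1 - q * q ^ n)) * u ^ (n+1) := by
          rw [mul_pow, pow_succ]; ring
      _ = (c n * (1 - α * q ^ n)) * u ^ (n+1) := by rw [hrec]
      _ = c n * u ^ (n+1) - α * (c n * (q*u) ^ n * u) := by
          rw [mul_pow, pow_succ]; ring
  have key : ∑' n, (c n * u ^ n - c n * (q * u) ^ n)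
      = ∑' n, (c n * u ^ (n + 1) - α * (c n * (q * u) ^ n * u)) := by
    rw [Summable.tsum_eq_zero_add SA]
    simp only [pow_zero, mul_one, sub_self, zero_add]
    exact tsum_congr claim1
  have L : (1 - u) * qbtF q α u = ∑' n, (c n * u ^ n - c n * u ^ (n + 1)) := by
    rw [qbtF, ← tsum_mul_left]
    exact tsum_congr fun n => by ring
  have R : (1 - α * u) * qbtF q α (q * u)
      = ∑' n, (c n * (q * u) ^ n - α * (c n * (q * u) ^ n * u)) := by
    rw [qbtF, ← tsum_mul_left]
    exact tsum_congr fun n => by ring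
  rw [L, R]
  have SX : Summable (fun n => c n * u ^ n - c n * u ^ (n + 1)) := S0.sub S1
  have SY : Summable (fun n => c n * (q * u) ^ n - α * (c n * (q * u) ^ n * u)) := S2.sub S3
  have h0 : ∑' n, ((c n * u ^ n - c n * u ^ (n + 1))
      - (c n * (q * u) ^ n - α * (c n * (q * u) ^ n * u))) = 0 := by
    have heq : ∀ n, (c n * u ^ n - c n * u ^ (n + 1))
        - (c n * (q * u) ^ n - α * (c n * (q * u) ^ n * u))
        = (c n * u ^ n - c n * (q * u) ^ n)
          - (c n * u ^ (n + 1) - α * (c n * (q * u) ^ n * u)) := fun n => by ring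
    rw [tsum_congr heq, Summable.tsum_sub SA SB, key, sub_self]
  rw [Summable.tsum_sub SX SY] at h0
  exact sub_eq_zero.mp h0

lemma qbt_iterate {q : ℂ} (hq1 : ‖q‖ < 1)
    (hqfac : ∀ j : ℕ, 1 - q * q ^ j ≠ 0) (α : ℂ) {w : ℂ} (hw : ‖w‖ < 1) (N : ℕ) :
    qPoch w q N * qbtF q α w = qPoch (α * w) q N * qbtF q α (q ^ N * w) := by
  induction N with
  | zero => simp [qPoch_zero]
  | succ N ih =>
    have hqNw : ‖q ^ N * w‖ < 1 := by
      rw [norm_mul, norm_pow]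
      calc ‖q‖ ^ N * ‖w‖ ≤ 1 * ‖w‖ := by
            exact mul_le_mul_of_nonneg_right (pow_le_one₀ (norm_nonneg q) hq1.le)
              (norm_nonneg w)
        _ = ‖w‖ := one_mul _
        _ < 1 := hw
    have hfe := qbt_funeq hq1 hqfac α hqNw
    calc qPoch w q (N + 1) * qbtF q α w
        = (1 - w * q ^ N) * (qPoch w q N * qbtF q α w) := by rw [qPoch_succ]; ring
      _ = (1 - w * q ^ N) * (qPoch (α * w) q N * qbtF q α (q ^ N * w)) := by rw [ih]
      _ = qPoch (α * w) q N * ((1 - q ^ N * w) * qbtF q α (q ^ N * w)) := by ring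
      _ = qPoch (α * w) q N * ((1 - α * (q ^ N * w)) * qbtF q α (q * (q ^ N * w))) := by
          rw [hfe]
      _ = qPoch (α * w) q (N + 1) * qbtF q α (q ^ (N + 1) * w) := by
          rw [qPoch_succ, pow_succ]; ring

lemma qbt_F_tendsto_one {q : ℂ} (hq1 : ‖q‖ < 1) (α : ℂ) {w : ℂ}
    (hw : ‖w‖ < 1) :
    Tendsto (fun N : ℕ => qbtF q α (q ^ N * w)) atTop (nhds 1) := by
  obtain ⟨M, hM, hbd⟩ := qbtTerm_bound hq1 α
  have hw0 : (0:ℝ) ≤ ‖w‖ := norm_nonneg w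
  have hbound : ∀ u : ℂ, ‖u‖ ≤ ‖w‖ →
      ‖qbtF q α u - 1‖ ≤ M / (1 - ‖w‖) * ‖u‖ := by
    intro u hu
    have hu1 : ‖u‖ < 1 := lt_of_le_of_lt hu hw
    have hS : Summable (fun n => qbtTerm q α n * u ^ n) := summable_qbt hq1 α hu1
    have hS' : Summable (fun n => qbtTerm q α (n + 1) * u ^ (n + 1)) :=
      (summable_nat_add_iff (f := fun n => qbtTerm q α n * u ^ n) 1).mpr hS
    have h1 : qbtF q α u - 1 = ∑' n, qbtTerm q α (n + 1) * u ^ (n + 1) := by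
      rw [qbtF, Summable.tsum_eq_zero_add hS]
      simp [qbtTerm, qPoch_zero]
    rw [h1]
    have hgeom : Summable (fun n : ℕ => M * ‖u‖ * ‖u‖ ^ n) :=
      ((summable_geometric_of_lt_one (norm_nonneg u) hu1).mul_left _)
    calc ‖∑' n, qbtTerm q α (n + 1) * u ^ (n + 1)‖
        ≤ ∑' n, ‖qbtTerm q α (n + 1) * u ^ (n + 1)‖ := by
          apply norm_tsum_le_tsum_norm
          exact hS'.norm
      _ ≤ ∑' n : ℕ, M * ‖u‖ * ‖u‖ ^ n := by
          apply Summable.tsum_le_tsum _ hS'.norm hgeom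
          intro n
          rw [norm_mul, norm_pow]
          calc ‖qbtTerm q α (n+1)‖ * ‖u‖ ^ (n+1)
              ≤ M * ‖u‖ ^ (n + 1) := by
                exact mul_le_mul_of_nonneg_right (hbd _) (by positivity)
            _ = M * ‖u‖ * ‖u‖ ^ n := by rw [pow_succ]; ring
      _ = M * ‖u‖ * (1 - ‖u‖)⁻¹ := by
          rw [tsum_mul_left, tsum_geometric_of_lt_one (norm_nonneg u) hu1]
      _ ≤ M / (1 - ‖w‖) * ‖u‖ := by
          rw [div_eq_mul_inv]
          have h2 : (1 - ‖u‖)⁻¹ ≤ (1 - ‖w‖)⁻¹ := by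
            apply inv_anti₀ (by linarith) (by linarith)
          calc M * ‖u‖ * (1 - ‖u‖)⁻¹
              ≤ M * ‖u‖ * (1 - ‖w‖)⁻¹ := by
                exact mul_le_mul_of_nonneg_left h2 (by positivity)
            _ = M * (1 - ‖w‖)⁻¹ * ‖u‖ := by ring
  have hnorm : ∀ N : ℕ, ‖qbtF q α (q ^ N * w) - 1‖
      ≤ M / (1 - ‖w‖) * ‖w‖ * ‖q‖ ^ N := by
    intro N
    have habs : ‖q ^ N * w‖ ≤ ‖w‖ := by
      rw [norm_mul, norm_pow]
      calc ‖q‖ ^ N * ‖w‖ ≤ 1 * ‖w‖ :=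
            mul_le_mul_of_nonneg_right (pow_le_one₀ (norm_nonneg q) hq1.le) hw0
        _ = ‖w‖ := one_mul _
    calc ‖qbtF q α (q ^ N * w) - 1‖
        ≤ M / (1 - ‖w‖) * ‖q ^ N * w‖ := hbound _ habs
      _ = M / (1 - ‖w‖) * (‖q‖ ^ N * ‖w‖) := by
          rw [norm_mul, norm_pow]
      _ = M / (1 - ‖w‖) * ‖w‖ * ‖q‖ ^ N := by ring
  have htend0 : Tendsto (fun N : ℕ => qbtF q α (q ^ N * w) - 1) atTop (nhds 0) := by
    apply squeeze_zero_norm hnorm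
    simpa using (tendsto_pow_atTop_nhds_zero_of_lt_one (norm_nonneg q) hq1).const_mul
      (M / (1 - ‖w‖) * ‖w‖)
  have := htend0.add_const 1
  simpa using this

theorem qBinomial {q : ℂ} (hq1 : ‖q‖ < 1)
    (hqfac : ∀ j : ℕ, 1 - q * q ^ j ≠ 0) (α : ℂ) {w : ℂ} (hw : ‖w‖ < 1)
    (hαw : ∀ j : ℕ, 1 - α * w * q ^ j ≠ 0) :
    ∑' n : ℕ, qPoch α q n / qPoch q q n * w ^ n = qPochInf (α * w) q / qPochInf w q := by
  have hwfac : ∀ j : ℕ, 1 - w * q ^ j ≠ 0 := factor_ne_zero_of_abs_lt hq1 hw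
  have t1 : Tendsto (fun N => qPoch w q N * qbtF q α w) atTop
      (nhds (qPochInf w q * qbtF q α w)) :=
    (tendsto_qPoch hq1 hwfac).mul_const _
  have t2 : Tendsto (fun N => qPoch (α * w) q N * qbtF q α (q ^ N * w)) atTop
      (nhds (qPochInf (α * w) q * 1)) :=
    (tendsto_qPoch hq1 hαw).mul (qbt_F_tendsto_one hq1 α hw)
  have heq : (fun N => qPoch w q N * qbtF q α w)
      = (fun N => qPoch (α * w) q N * qbtF q α (q ^ N * w)) :=
    funext fun N => qbt_iterate hq1 hqfac α hw N
  rw [heq] at t1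
  have hlim : qPochInf w q * qbtF q α w = qPochInf (α * w) q * 1 :=
    tendsto_nhds_unique t1 t2
  have hne : qPochInf w q ≠ 0 := qPochInf_ne_zero hq1 hwfac
  have : qbtF q α w = qPochInf (α * w) q / qPochInf w q := by
    rw [mul_one] at hlim
    field_simp
    linear_combination hlim
  rw [← this, qbtF]
  rfl

/-! ### Finite key identity -/

lemma qPoch_inv_pow_key {q : ℂ} (hq0 : q ≠ 0) (n : ℕ) :
    ∀ k, k ≤ n → qPoch (q⁻¹ ^ n) q k * q ^ (n * k) * qPoch q q (n - k)
      = (-1) ^ k * q ^ (k * (k - 1) / 2) * qPoch q q n := by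
  intro k
  induction k with
  | zero => intro _; simp [qPoch_zero]
  | succ k ih =>
    intro hk
    have hkn : k ≤ n := Nat.le_of_succ_le hk
    set m := n - (k + 1) with hmdef
    have hm : n - k = m + 1 := by omega
    have hik := ih hkn
    rw [hm] at hik
    have hqinv : (q⁻¹ : ℂ) ^ n * q ^ n = 1 := by
      rw [inv_pow]
      exact inv_mul_cancel₀ (pow_ne_zero n hq0)
    have hpow : (q : ℂ) ^ n = q ^ k * (q * q ^ m) := by
      have hsum : k + m + 1 = n := by omega
      rw [← hsum]
      ring
    have fact : (1 - q⁻¹ ^ n * q ^ k) * q ^ n = -q ^ k * (1 - q * q ^ m) := by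
      linear_combination (-(q:ℂ) ^ k) * hqinv + hpow
    have he : (k + 1) * ((k + 1) - 1) / 2 = k * (k - 1) / 2 + k := by
      rw [← Nat.choose_two_right, ← Nat.choose_two_right, Nat.choose_succ_succ,
        Nat.choose_one_right]
      show k + k.choose 2 = k.choose 2 + k
      omega
    calc qPoch (q⁻¹ ^ n) q (k + 1) * q ^ (n * (k + 1)) * qPoch q q (n - (k + 1))
        = (qPoch (q⁻¹ ^ n) q k * q ^ (n * k) * qPoch q q m)
            * ((1 - q⁻¹ ^ n * q ^ k) * q ^ n) := by
          rw [qPoch_succ, show n * (k + 1) = n * k + n by ring, pow_add]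
          ring
      _ = (qPoch (q⁻¹ ^ n) q k * q ^ (n * k) * qPoch q q m) * (-q ^ k * (1 - q * q ^ m)) := by
          rw [fact]
      _ = (qPoch (q⁻¹ ^ n) q k * q ^ (n * k) * qPoch q q (m + 1)) * (-q ^ k) := by
          rw [qPoch_succ]; ring
      _ = ((-1) ^ k * q ^ (k * (k - 1) / 2) * qPoch q q n) * (-q ^ k) := by rw [hik]
      _ = (-1) ^ (k + 1) * q ^ ((k + 1) * ((k + 1) - 1) / 2) * qPoch q q n := by
          rw [he, pow_add, pow_succ (-1 : ℂ)]
          ring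

/-! ### Main development -/


noncomputable def mainG (q γ a b t z : ℂ) (p : ℕ × ℕ) : ℂ :=
  qPoch γ q (p.2 + p.1) * (-(b * t)) ^ (p.2 + p.1) * (a / b) ^ p.1 *
    (qPoch (z / a) q p.1 * qPoch (1 / (a * z)) q p.1 /
      (qPoch q q p.1 * qPoch (1 / (a * b)) q p.1)) / qPoch q q p.2

lemma term_eq (q γ a b t z : ℂ) (hq0 : q ≠ 0) (hq1 : ‖q‖ < 1)
    (hb : b ≠ 0)
    (hiab : ∀ j : ℕ, 1 - (1 / (a * b)) * q ^ j ≠ 0) (n : ℕ) :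
    t ^ n * qPoch γ q n * q ^ (n * (n - 1) / 2) * alSalamChiharaInv q a b z n /
        (qPoch q q n * qPoch (1 / (a * b)) q n)
      = ∑ k ∈ Finset.range (n + 1), mainG q γ a b t z (k, n - k) := by
  rw [alSalamChiharaInv]
  simp only [Finset.mul_sum, Finset.sum_div]
  refine Finset.sum_congr rfl fun k hk => ?_
  have hk' : k ≤ n := Nat.lt_succ_iff.mp (Finset.mem_range.mp hk)
  have hneg : ((-1 : ℂ)) ^ k * (-1) ^ k = 1 := by
    rw [← pow_add, ← two_mul, pow_mul]; norm_num
  have hPn : qPoch q q n ≠ 0 := qPoch_ne_zero (factor_q_ne_zero hq1) n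
  have hPm : qPoch q q (n - k) ≠ 0 := qPoch_ne_zero (factor_q_ne_zero hq1) _
  have hPk : qPoch q q k ≠ 0 := qPoch_ne_zero (factor_q_ne_zero hq1) k
  have hIk : qPoch (1 / (a * b)) q k ≠ 0 := qPoch_ne_zero hiab k
  have hIn : qPoch (1 / (a * b)) q n ≠ 0 := qPoch_ne_zero hiab n
  have hqE : (q : ℂ) ^ (n * (n - 1) / 2) ≠ 0 := pow_ne_zero _ hq0
  have hqF : (q : ℂ) ^ (k * (k - 1) / 2) ≠ 0 := pow_ne_zero _ hq0
  have hqnk : (q : ℂ) ^ (n * k) ≠ 0 := pow_ne_zero _ hq0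
  have key := qPoch_inv_pow_key hq0 n k hk'
  have hdiv : qPoch (q⁻¹ ^ n) q k * q ^ (n * k)
      = (-1) ^ k * q ^ (k * (k - 1) / 2) * qPoch q q n / qPoch q q (n - k) := by
    rw [eq_div_iff hPm]; linear_combination key
  have h1 : qPoch (q⁻¹ ^ n) q k *
      ((-1) ^ k * ((q : ℂ) ^ (k * (k - 1) / 2))⁻¹ * (q ^ (n * k) * (a / b) ^ k))
      = qPoch q q n / qPoch q q (n - k) * (a / b) ^ k := by
    calc qPoch (q⁻¹ ^ n) q k *
        ((-1) ^ k * ((q : ℂ) ^ (k * (k - 1) / 2))⁻¹ * (q ^ (n * k) * (a / b) ^ k))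
        = (qPoch (q⁻¹ ^ n) q k * q ^ (n * k)) *
            ((-1) ^ k * (a / b) ^ k) * ((q : ℂ) ^ (k * (k - 1) / 2))⁻¹ := by ring
      _ = ((-1) ^ k * q ^ (k * (k - 1) / 2) * qPoch q q n / qPoch q q (n - k)) *
            ((-1) ^ k * (a / b) ^ k) * ((q : ℂ) ^ (k * (k - 1) / 2))⁻¹ := by rw [hdiv]
      _ = ((-1 : ℂ) ^ k * (-1) ^ k) *
            ((q : ℂ) ^ (k * (k - 1) / 2) * ((q : ℂ) ^ (k * (k - 1) / 2))⁻¹) *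
            (qPoch q q n / qPoch q q (n - k) * (a / b) ^ k) := by ring
      _ = qPoch q q n / qPoch q q (n - k) * (a / b) ^ k := by
          rw [hneg, mul_inv_cancel₀ hqF]; ring
  have hW : ((q : ℂ) ^ n * a / b) ^ k = q ^ (n * k) * (a / b) ^ k := by
    rw [div_pow, mul_pow, pow_mul, div_pow]; ring
  have hbt : (-(b * t) : ℂ) ^ n = t ^ n * (-b) ^ n := by
    rw [show (-(b * t) : ℂ) = (-b) * t by ring, mul_pow]; ring
  have hnk : n - k + k = n := by omega
  simp only [mainG, Prod.fst, Prod.snd]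
  rw [hnk, hbt, hW]
  simp only [zpow_neg, zpow_natCast]
  trans ((t ^ n * qPoch γ q n * (-b) ^ n * qPoch (1 / (a * b)) q n *
      (qPoch (z / a) q k * qPoch (1 / (a * z)) q k /
        (qPoch q q k * qPoch (1 / (a * b)) q k)) /
      (qPoch q q n * qPoch (1 / (a * b)) q n)) *
    (qPoch (q⁻¹ ^ n) q k *
      ((-1) ^ k * ((q : ℂ) ^ (k * (k - 1) / 2))⁻¹ * (q ^ (n * k) * (a / b) ^ k))) *
    ((q : ℂ) ^ (n * (n - 1) / 2) * ((q : ℂ) ^ (n * (n - 1) / 2))⁻¹))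
  · ring
  · rw [mul_inv_cancel₀ hqE, mul_one, h1]
    generalize qPoch (1 / (a * b)) q n = P at hIn ⊢
    generalize qPoch (1 / (a * b)) q k = R at hIk ⊢
    field_simp

lemma summable_mainG (q γ a b t z : ℂ) (hq1 : ‖q‖ < 1)
    (hta : ‖a * t‖ < 1) (htb : ‖b * t‖ < 1) (hb : b ≠ 0)
    (hiab : ∀ j : ℕ, 1 - (1 / (a * b)) * q ^ j ≠ 0) :
    Summable (mainG q γ a b t z) := by
  obtain ⟨δ1, hδ1, hP⟩ := qPoch_lower hq1 (factor_q_ne_zero hq1)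
  obtain ⟨δ2, hδ2, hI⟩ := qPoch_lower hq1 hiab
  set Kg := Real.exp (‖γ‖ / (1 - ‖q‖)) with hKg
  set K1 := Real.exp (‖z / a‖ / (1 - ‖q‖)) with hK1
  set K2 := Real.exp (‖1 / (a * z)‖ / (1 - ‖q‖)) with hK2
  have hKgpos : 0 < Kg := Real.exp_pos _
  have hK1pos : 0 < K1 := Real.exp_pos _
  have hK2pos : 0 < K2 := Real.exp_pos _
  set C := Kg * (K1 * K2 / (δ1 * δ2)) * (1 / δ1) with hC
  have hCpos : 0 < C := by positivity
  have habt : ‖b * t‖ * ‖a / b‖ = ‖a * t‖ := by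
    rw [← norm_mul]
    congr 1
    field_simp
  apply Summable.of_norm_bounded (g := fun p : ℕ × ℕ => C * ‖a * t‖ ^ p.1 *
    ‖b * t‖ ^ p.2)
  · have := Summable.mul_of_nonneg
      (f := fun k : ℕ => C * ‖a * t‖ ^ k)
      (g := fun m : ℕ => ‖b * t‖ ^ m)
      ((summable_geometric_of_lt_one (norm_nonneg _) hta).mul_left C)
      (summable_geometric_of_lt_one (norm_nonneg _) htb)
      (fun k => by positivity) (fun m => by positivity)
    exact this.congr fun p => by ring
  · rintro ⟨k, m⟩
    have hPkpos : 0 < ‖qPoch q q k‖ := lt_of_lt_of_le hδ1 (hP k)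
    have hIkpos : 0 < ‖qPoch (1 / (a * b)) q k‖ := lt_of_lt_of_le hδ2 (hI k)
    have hPmpos : 0 < ‖qPoch q q m‖ := lt_of_lt_of_le hδ1 (hP m)
    have step1 : ‖mainG q γ a b t z (k, m)‖
        = ‖qPoch γ q (m + k)‖ * (‖b * t‖ ^ (m + k) *
            ‖a / b‖ ^ k) *
          (‖qPoch (z / a) q k‖ * ‖qPoch (1 / (a * z)) q k‖ /
            (‖qPoch q q k‖ * ‖qPoch (1 / (a * b)) q k‖)) *
          (1 / ‖qPoch q q m‖) := by
      simp only [mainG, norm_div, norm_mul, norm_pow, norm_neg]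
      ring
    rw [step1]
    calc ‖qPoch γ q (m + k)‖ * (‖b * t‖ ^ (m + k) *
            ‖a / b‖ ^ k) *
          (‖qPoch (z / a) q k‖ * ‖qPoch (1 / (a * z)) q k‖ /
            (‖qPoch q q k‖ * ‖qPoch (1 / (a * b)) q k‖)) *
          (1 / ‖qPoch q q m‖)
        ≤ Kg * (‖b * t‖ ^ (m + k) * ‖a / b‖ ^ k) *
          (K1 * K2 / (δ1 * δ2)) * (1 / δ1) := by
          have e1 : ‖qPoch γ q (m + k)‖ ≤ Kg := abs_qPoch_le hq1 _
          have e2 : ‖qPoch (z / a) q k‖ ≤ K1 := abs_qPoch_le hq1 _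
          have e3 : ‖qPoch (1 / (a * z)) q k‖ ≤ K2 := abs_qPoch_le hq1 _
          gcongr
          · exact hP k
          · exact hI k
          · exact hP m
      _ = C * (‖b * t‖ * ‖a / b‖) ^ k *
            ‖b * t‖ ^ m := by
          rw [hC, pow_add, mul_pow]
          ring
      _ = C * ‖a * t‖ ^ k * ‖b * t‖ ^ m := by rw [habt]

lemma tsum_triangle (g : ℕ × ℕ → ℂ) (hg : Summable g) :
    ∑' n : ℕ, ∑ k ∈ Finset.range (n + 1), g (k, n - k)
      = ∑' k : ℕ, ∑' m : ℕ, g (k, m) := by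
  have hs : Summable (fun x : Σ n : ℕ, Finset.HasAntidiagonal.antidiagonal n => g x.2) := by
    have h := ((Finset.HasAntidiagonal.sigmaAntidiagonalEquivProd (A := ℕ)).summable_iff (f := g)).mpr hg
    exact h
  have h2 : ∑' x : Σ n : ℕ, Finset.HasAntidiagonal.antidiagonal n, g x.2
      = ∑' n : ℕ, ∑' p : Finset.HasAntidiagonal.antidiagonal n, g p := by
    exact Summable.tsum_sigma' (fun n => (Finset.HasAntidiagonal.antidiagonal n).summable _) hs
  have h3 : ∀ n : ℕ, ∑' p : Finset.HasAntidiagonal.antidiagonal n, g (p : ℕ × ℕ)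
      = ∑ k ∈ Finset.range (n + 1), g (k, n - k) := by
    intro n
    rw [Finset.tsum_subtype]
    exact Finset.Nat.sum_antidiagonal_eq_sum_range_succ_mk g n
  have h4 : ∑' x : Σ n : ℕ, Finset.HasAntidiagonal.antidiagonal n, g x.2 = ∑' p : ℕ × ℕ, g p := by
    have h := (Finset.HasAntidiagonal.sigmaAntidiagonalEquivProd (A := ℕ)).tsum_eq g
    simpa [Finset.HasAntidiagonal.sigmaAntidiagonalEquivProd_apply] using h
  have h5 : ∑' p : ℕ × ℕ, g p = ∑' k : ℕ, ∑' m : ℕ, g (k, m) :=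
    Summable.tsum_prod' hg (fun k => hg.prod_factor k)
  calc ∑' n : ℕ, ∑ k ∈ Finset.range (n + 1), g (k, n - k)
      = ∑' n : ℕ, ∑' p : Finset.HasAntidiagonal.antidiagonal n, g (p : ℕ × ℕ) := by
        exact tsum_congr fun n => (h3 n).symm
    _ = ∑' x : Σ n : ℕ, Finset.HasAntidiagonal.antidiagonal n, g x.2 := h2.symm
    _ = ∑' p : ℕ × ℕ, g p := h4
    _ = ∑' k : ℕ, ∑' m : ℕ, g (k, m) := h5

lemma mainG_inner_sum (q γ a b t z : ℂ) (hq1 : ‖q‖ < 1) (hb : b ≠ 0)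
    (htb : ‖b * t‖ < 1)
    (hqfac : ∀ j : ℕ, 1 - q * q ^ j ≠ 0)
    (hgbtfac : ∀ j : ℕ, 1 - (-(γ * b * t)) * q ^ j ≠ 0) (k : ℕ) :
    ∑' m : ℕ, mainG q γ a b t z (k, m)
      = qPochInf (-(γ * b * t)) q / qPochInf (-(b * t)) q *
          (qPoch γ q k * qPoch (z / a) q k * qPoch (1 / (a * z)) q k /
            (qPoch q q k * qPoch (1 / (a * b)) q k * qPoch (-(γ * b * t)) q k) *
            (-(a * t)) ^ k) := by
  have hwabs : ‖-(b * t)‖ < 1 := by rwa [norm_neg]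
  have hbtfac : ∀ j : ℕ, 1 - (-(b * t)) * q ^ j ≠ 0 :=
    factor_ne_zero_of_abs_lt hq1 hwabs
  have hαw : ∀ j : ℕ, 1 - γ * q ^ k * -(b * t) * q ^ j ≠ 0 := by
    intro j
    have h := hgbtfac (k + j)
    have heq : 1 - γ * q ^ k * -(b * t) * q ^ j = 1 - -(γ * b * t) * q ^ (k + j) := by
      rw [pow_add]; ring
    rwa [heq]
  have hqbt := qBinomial hq1 hqfac (γ * q ^ k) hwabs hαw
  have hsplit := qPochInf_split hq1 hgbtfac k
  have hPg : qPoch (-(γ * b * t)) q k ≠ 0 := qPoch_ne_zero hgbtfac k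
  have hInfbt : qPochInf (-(b * t)) q ≠ 0 := qPochInf_ne_zero hq1 hbtfac
  have hstep : ∀ m : ℕ, mainG q γ a b t z (k, m)
      = (qPoch γ q k * (-(b * t)) ^ k * (a / b) ^ k *
          (qPoch (z / a) q k * qPoch (1 / (a * z)) q k /
            (qPoch q q k * qPoch (1 / (a * b)) q k))) *
        (qPoch (γ * q ^ k) q m / qPoch q q m * (-(b * t)) ^ m) := by
    intro m
    simp only [mainG, Prod.fst, Prod.snd]
    rw [show m + k = k + m by omega, qPoch_add, pow_add]
    ring
  rw [tsum_congr hstep, tsum_mul_left, hqbt]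
  have harg : γ * q ^ k * -(b * t) = -(γ * b * t) * q ^ k := by ring
  rw [harg]
  have hInfgk : qPochInf (-(γ * b * t) * q ^ k) q
      = qPochInf (-(γ * b * t)) q / qPoch (-(γ * b * t)) q k := by
    rw [eq_div_iff hPg]
    rw [hsplit]; ring
  rw [hInfgk]
  have hab' : (-(b * t) : ℂ) ^ k * (a / b) ^ k = (-(a * t)) ^ k := by
    rw [← mul_pow]
    congr 1
    field_simp
  have hCk : qPoch γ q k * (-(b * t)) ^ k * (a / b) ^ k *
      (qPoch (z / a) q k * qPoch (1 / (a * z)) q k /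
        (qPoch q q k * qPoch (1 / (a * b)) q k))
      = qPoch γ q k * (-(a * t)) ^ k *
        (qPoch (z / a) q k * qPoch (1 / (a * z)) q k /
          (qPoch q q k * qPoch (1 / (a * b)) q k)) := by
    linear_combination (qPoch (z / a) q k * qPoch (1 / (a * z)) q k /
      (qPoch q q k * qPoch (1 / (a * b)) q k)) * qPoch γ q k * hab'
  rw [hCk]
  field_simp

/-- 3φ2 generating function with free parameter γ for the q-inverse
Al-Salam--Chihara polynomials. -/
theorem alSalamChiharaInv_gamma_generating_function
    (q : ℂ) (hq0 : 0 < ‖q‖) (hq1 : ‖q‖ < 1)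
    (γ a b t z : ℂ) (hγ : γ ≠ 0) (ha : a ≠ 0) (hb : b ≠ 0) (ht0 : t ≠ 0) (hz : z ≠ 0)
    (hta : ‖a * t‖ < 1) (htb : ‖b * t‖ < 1)
    (hab : 1 / (a * b) ∉ Omega q)
    (hbt : -(b * t) ∉ Omega q) (hgbt : -(γ * b * t) ∉ Omega q)
    (x : ℂ) (hx : x = (z + z⁻¹) / 2) :
    ∑' n : ℕ, t ^ n * qPoch γ q n * q ^ (n * (n - 1) / 2) * alSalamChiharaInv q a b z n /
        (qPoch q q n * qPoch (1 / (a * b)) q n) =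
      qPochInf (-(γ * b * t)) q / qPochInf (-(b * t)) q *
        ∑' k : ℕ, (qPoch γ q k * qPoch (z / a) q k * qPoch (1 / (a * z)) q k) /
          (qPoch q q k * qPoch (1 / (a * b)) q k * qPoch (-(γ * b * t)) q k) *
          (-(a * t)) ^ k := by
  have hq0' : q ≠ 0 := by
    intro h
    rw [h] at hq0
    simp at hq0
  have hiab : ∀ j : ℕ, 1 - (1 / (a * b)) * q ^ j ≠ 0 :=
    factor_ne_zero_of_not_omega hq0' hab
  have hgbtfac : ∀ j : ℕ, 1 - (-(γ * b * t)) * q ^ j ≠ 0 :=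
    factor_ne_zero_of_not_omega hq0' hgbt
  have hqfac : ∀ j : ℕ, 1 - q * q ^ j ≠ 0 := factor_q_ne_zero hq1
  have hsum : Summable (mainG q γ a b t z) := summable_mainG q γ a b t z hq1 hta htb hb hiab
  calc ∑' n : ℕ, t ^ n * qPoch γ q n * q ^ (n * (n - 1) / 2) * alSalamChiharaInv q a b z n /
        (qPoch q q n * qPoch (1 / (a * b)) q n)
      = ∑' n : ℕ, ∑ k ∈ Finset.range (n + 1), mainG q γ a b t z (k, n - k) :=
        tsum_congr fun n => term_eq q γ a b t z hq0' hq1 hb hiab n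
    _ = ∑' k : ℕ, ∑' m : ℕ, mainG q γ a b t z (k, m) := tsum_triangle _ hsum
    _ = ∑' k : ℕ, qPochInf (-(γ * b * t)) q / qPochInf (-(b * t)) q *
          (qPoch γ q k * qPoch (z / a) q k * qPoch (1 / (a * z)) q k /
            (qPoch q q k * qPoch (1 / (a * b)) q k * qPoch (-(γ * b * t)) q k) *
            (-(a * t)) ^ k) :=
        tsum_congr fun k => mainG_inner_sum q γ a b t z hq1 hb htb hqfac hgbtfac k
    _ = qPochInf (-(γ * b * t)) q / qPochInf (-(b * t)) q *
        ∑' k : ℕ, (qPoch γ q k * qPoch (z / a) q k * qPoch (1 / (a * z)) q k) /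
          (qPoch q q k * qPoch (1 / (a * b)) q k * qPoch (-(γ * b * t)) q k) *
          (-(a * t)) ^ k := tsum_mul_left
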